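/- Let V be an (A, Der A)-module and α ∈ ℂ^d. For all r, s ∈ ℤ^d, the operator μ(t^{s−r}) restricts to a ℂ-linear bijection f : V_r → V_s satisfying f(T(u,m)v) = T(u,m)(f(v)) for all u ∈ ℂ^d, m ∈ ℤ^d and v ∈ V_r; thus V_r and V_s are isomorphic as modules over the operators T(u,m). -/

import Mathlib

attribute [local instance] LieRing.ofAssociativeRing

/-- `A = ℂ[t₁^{±1},…,t_d^{±1}]`, the group algebra of `ℤ^d` over `ℂ`. -/
abbrev Ad (d : ℕ) := AddMonoidAlgebra ℂ (Fin d → ℤ)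

/-- The monomial `t^r`. -/
noncomputable def tm {d : ℕ} (r : Fin d → ℤ) : Ad d := AddMonoidAlgebra.single r 1

/-- `IsD u r D` says that the derivation `D` of `A` is `D(u,r) = ∑ᵢ uᵢ t^r tᵢ ∂/∂tᵢ`. -/
def IsD {d : ℕ} (u : Fin d → ℂ) (r : Fin d → ℤ)
    (D : Derivation ℂ (Ad d) (Ad d)) : Prop :=
  ∀ s : Fin d → ℤ, D (tm s) = (∑ i, u i * (s i : ℂ)) • tm (r + s)

/-- The weight space `V_m = {v ∈ V : ρ(D(u,0)) v = (u, m+α) v for all u ∈ ℂ^d}`. -/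
noncomputable def wtSp {d : ℕ} {V : Type*} [AddCommGroup V] [Module ℂ V]
    (ρ : Derivation ℂ (Ad d) (Ad d) →ₗ⁅ℂ⁆ Module.End ℂ V)
    (α : Fin d → ℂ) (m : Fin d → ℤ) : Submodule ℂ V :=
  ⨅ (u : Fin d → ℂ) (D : Derivation ℂ (Ad d) (Ad d)) (_ : IsD u 0 D),
    LinearMap.ker (ρ D - (∑ i, u i * ((m i : ℂ) + α i)) • (1 : Module.End ℂ V))

lemma tm_mul {d : ℕ} (a b : Fin d → ℤ) : tm a * tm b = tm (a + b) := by
  simp [tm, AddMonoidAlgebra.single_mul_single]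

lemma tm_zero {d : ℕ} : (tm (0 : Fin d → ℤ)) = 1 := rfl

lemma mem_wtSp {d : ℕ} {V : Type*} [AddCommGroup V] [Module ℂ V]
    (ρ : Derivation ℂ (Ad d) (Ad d) →ₗ⁅ℂ⁆ Module.End ℂ V)
    (α : Fin d → ℂ) (m : Fin d → ℤ) (v : V) :
    v ∈ wtSp ρ α m ↔ ∀ (u : Fin d → ℂ) (D : Derivation ℂ (Ad d) (Ad d)),
      IsD u 0 D → ρ D v = (∑ i, u i * ((m i : ℂ) + α i)) • v := by
  simp [wtSp, Submodule.mem_iInf, LinearMap.mem_ker, LinearMap.sub_apply,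
    LinearMap.smul_apply, Module.End.one_apply, sub_eq_zero]

section
variable {d : ℕ} {V : Type*} [AddCommGroup V] [Module ℂ V]
  (μ : Ad d →ₐ[ℂ] Module.End ℂ V)
  (ρ : Derivation ℂ (Ad d) (Ad d) →ₗ⁅ℂ⁆ Module.End ℂ V)
  (hcompat : ∀ (D : Derivation ℂ (Ad d) (Ad d)) (a : Ad d),
      ρ D * μ a - μ a * ρ D = μ (D a))

include hcompat in
lemma comm_key (u : Fin d → ℂ) (m : Fin d → ℤ) (D : Derivation ℂ (Ad d) (Ad d))
    (hD : IsD u m D) (q : Fin d → ℤ) :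
    ρ D * μ (tm q) = μ (tm q) * ρ D + (∑ i, u i * (q i : ℂ)) • μ (tm (m + q)) := by
  have h := hcompat D (tm q)
  rw [hD q, map_smul] at h
  exact sub_eq_iff_eq_add'.mp h

include hcompat in
lemma map_into (α : Fin d → ℂ) (q ra : Fin d → ℤ) :
    ∀ v ∈ wtSp ρ α ra, μ (tm q) v ∈ wtSp ρ α (ra + q) := by
  intro v hv
  rw [mem_wtSp] at hv ⊢
  intro u D hD
  have h := comm_key μ ρ hcompat u 0 D hD q
  have h2 := congrArg (fun f : Module.End ℂ V => f v) h
  simp only [Module.End.mul_apply, LinearMap.add_apply, LinearMap.smul_apply,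
    zero_add] at h2
  rw [h2, hv u D hD, map_smul, ← add_smul]
  congr 1
  rw [← Finset.sum_add_distrib]
  apply Finset.sum_congr rfl
  intro i _
  simp only [Pi.add_apply]
  push_cast
  ring

end

/-- For an `(A, Der A)`-module `(V, μ, ρ)` and any `r, s ∈ ℤ^d`, the operator
`μ(t^{s−r})` restricts to a `ℂ`-linear bijection `f : V_r → V_s` which intertwines the
operators `T(u,m) = μ(t^{-m})∘ρ(D(u,m)) − ρ(D(u,0))`; hence `V_r ≅ V_s` as modules
over the operators `T(u,m)`. -/
theorem weight_spaces_isomorphic_as_T_modules (d : ℕ) (hd : 2 ≤ d) (α : Fin d → ℂ)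
    (V : Type*) [AddCommGroup V] [Module ℂ V]
    (μ : Ad d →ₐ[ℂ] Module.End ℂ V)
    (ρ : Derivation ℂ (Ad d) (Ad d) →ₗ⁅ℂ⁆ Module.End ℂ V)
    (hcompat : ∀ (D : Derivation ℂ (Ad d) (Ad d)) (a : Ad d),
      ρ D * μ a - μ a * ρ D = μ (D a))
    (r s : Fin d → ℤ) :
    Submodule.map (μ (tm (s - r)) : V →ₗ[ℂ] V) (wtSp ρ α r) = wtSp ρ α s ∧
    Set.InjOn (μ (tm (s - r))) (wtSp ρ α r : Set V) ∧
    (∀ (u : Fin d → ℂ) (m : Fin d → ℤ) (D D0 : Derivation ℂ (Ad d) (Ad d)),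
      IsD u m D → IsD u 0 D0 →
      ∀ v ∈ wtSp ρ α r,
        μ (tm (s - r)) ((μ (tm (-m)) * ρ D - ρ D0) v)
          = (μ (tm (-m)) * ρ D - ρ D0) (μ (tm (s - r)) v)) := by
  have hinv : ∀ v : V, μ (tm (s - r)) (μ (tm (r - s)) v) = v := by
    intro v
    rw [← Module.End.mul_apply, ← map_mul, tm_mul]
    have : s - r + (r - s) = (0 : Fin d → ℤ) := by abel
    rw [this, tm_zero, map_one, Module.End.one_apply]
  refine ⟨?_, ?_, ?_⟩
  · apply le_antisymm
    · rintro _ ⟨v, hv, rfl⟩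
      have := map_into μ ρ hcompat α (s - r) r v hv
      rwa [show r + (s - r) = s by abel] at this
    · intro v hv
      refine ⟨μ (tm (r - s)) v, ?_, hinv v⟩
      have := map_into μ ρ hcompat α (r - s) s v hv
      rwa [show s + (r - s) = r by abel] at this
  · intro x _ y _ h
    have := congrArg (μ (tm (r - s))) h
    rw [← Module.End.mul_apply, ← Module.End.mul_apply, ← map_mul, tm_mul,
      show r - s + (s - r) = (0 : Fin d → ℤ) by abel, tm_zero, map_one,
      Module.End.one_apply, Module.End.one_apply] at this
    exact this
  · intro u m D D0 hD hD0 v _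
    have h1 := comm_key μ ρ hcompat u m D hD (s - r)
    have h2 := comm_key μ ρ hcompat u 0 D0 hD0 (s - r)
    have key : μ (tm (s - r)) * (μ (tm (-m)) * ρ D - ρ D0)
        = (μ (tm (-m)) * ρ D - ρ D0) * μ (tm (s - r)) := by
      have e1 : μ (tm (s - r)) * μ (tm (-m)) = μ (tm (-m)) * μ (tm (s - r)) := by
        rw [← map_mul, ← map_mul, tm_mul, tm_mul, add_comm]
      have e2 : μ (tm (-m)) * μ (tm (m + (s - r))) = μ (tm (s - r)) := by
        rw [← map_mul, tm_mul, show -m + (m + (s - r)) = s - r by abel]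
      rw [mul_sub, sub_mul, ← mul_assoc, e1, mul_assoc, mul_assoc, h1, h2,
        zero_add, mul_add, mul_smul_comm, e2]
      abel
    exact congrArg (fun f : Module.End ℂ V => f v) key
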